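/- arXiv:2604.19900 — 2 statements merged into one kernel-verified Lean document; each statement's English description precedes it below -/
import Mathlib

section
/- Let n ≥ 1, let Q be a real n×n matrix with Q 1 = 0, set B = Q + Qᵀ, let F be a symmetric real n×n matrix, and let v, φ ∈ ℝⁿ satisfy the discrete Tadmor shuffle condition (v_i − v_j) F_{ij} = φ_i − φ_j for all 1 ≤ i,j ≤ n. Then vᵀ((Q − Qᵀ) ∘ F) 1 = −1ᵀ B φ. (This is the core algebraic step of Theorem 3: the entropy-projected volume term of the space-time NSFR discretization reduces to a discrete surface integral of the entropy potential.) -/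
open Matrix Finset

/-- Core algebraic step of Theorem 3: if `Q 1 = 0`, `B = Q + Qᵀ`, `F` is symmetric,
and the discrete Tadmor shuffle condition `(v_i − v_j) F_{ij} = φ_i − φ_j` holds,
then `vᵀ((Q − Qᵀ) ∘ F) 1 = −1ᵀ B φ`. -/
theorem volume_term_reduces_to_surface (n : ℕ) (hn : 1 ≤ n)
    (Q F : Matrix (Fin n) (Fin n) ℝ)
    (hQ : Q *ᵥ (1 : Fin n → ℝ) = 0)
    (hF : ∀ i j, F i j = F j i)
    (v φ : Fin n → ℝ)
    (hshuffle : ∀ i j, (v i - v j) * F i j = φ i - φ j) :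
    ∑ i, ∑ j, v i * (Matrix.hadamard (Q - Qᵀ) F) i j * (1 : Fin n → ℝ) j
      = -∑ i, ((Q + Qᵀ) *ᵥ φ) i := by
  have hrow : ∀ i, ∑ j, Q i j = 0 := by
    intro i
    have := congrFun hQ i
    simpa [Matrix.mulVec, dotProduct] using this
  have hswap : ∑ i, ∑ j, v i * (Q j i * F i j) = ∑ i, ∑ j, v j * Q i j * F i j := by
    rw [Finset.sum_comm]
    exact Finset.sum_congr rfl fun i _ => Finset.sum_congr rfl fun j _ => by
      rw [hF j i]; ring
  have hmid : ∑ i, ∑ j, v i * (Matrix.hadamard (Q - Qᵀ) F) i j * (1 : Fin n → ℝ) j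
      = ∑ i, ∑ j, Q i j * (φ i - φ j) := by
    have hL : ∑ i, ∑ j, v i * (Matrix.hadamard (Q - Qᵀ) F) i j * (1 : Fin n → ℝ) j
        = ∑ i, ∑ j, (v i * Q i j * F i j - v i * (Q j i * F i j)) := by
      refine Finset.sum_congr rfl fun i _ => Finset.sum_congr rfl fun j _ => ?_
      simp [Matrix.hadamard, Matrix.transpose_apply]
      ring
    rw [hL]
    simp only [Finset.sum_sub_distrib]
    rw [hswap, ← Finset.sum_sub_distrib]
    simp only [← Finset.sum_sub_distrib]
    refine Finset.sum_congr rfl fun i _ => Finset.sum_congr rfl fun j _ => ?_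
    rw [← hshuffle i j]; ring
  have hfirst : ∑ i, ∑ j, Q i j * φ i = 0 := by
    refine Finset.sum_eq_zero fun i _ => ?_
    rw [← Finset.sum_mul, hrow i, zero_mul]
  have hlast : ∑ i, ∑ j, Q j i * φ j = 0 := by
    rw [Finset.sum_comm]
    refine Finset.sum_eq_zero fun j _ => ?_
    rw [← Finset.sum_mul, hrow j, zero_mul]
  have hR : ∑ i, ((Q + Qᵀ) *ᵥ φ) i = ∑ i, ∑ j, Q i j * φ j := by
    have : ∀ i, ((Q + Qᵀ) *ᵥ φ) i = ∑ j, (Q i j * φ j + Q j i * φ j) := by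
      intro i
      simp [Matrix.mulVec, dotProduct, Matrix.transpose_apply, add_mul]
    simp only [this, Finset.sum_add_distrib]
    rw [hlast, add_zero]
  rw [hmid, hR]
  simp only [mul_sub, Finset.sum_sub_distrib]
  rw [hfirst, zero_sub]
end

section
/- Let a < b be real numbers, let k ≥ 1 be a natural number, and let u, v : ℝ → ℝ be k-times continuously differentiable with ⟨u,v⟩_{L²} ≥ 0. Then for every flux-reconstruction parameter c satisfying 0 ≤ c and c ‖D^k u‖ ‖D^k v‖ ≤ ⟨u,v⟩_{L²}, one has ⟨u,v⟩_{H^k_c} ≥ ⟨u,v⟩_{L²} − c ‖D^k u‖ ‖D^k v‖ ≥ 0. (Theorem 6: there is a range of values of the flux-reconstruction parameter c for which the broken Sobolev inner product remains non-negative.) -/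
open intervalIntegral

/-- Cauchy–Schwarz for interval integrals of continuous functions. -/
lemma integral_cauchy_schwarz (a b : ℝ) (hab : a ≤ b) (f g : ℝ → ℝ)
    (hf : Continuous f) (hg : Continuous g) :
    -(Real.sqrt (∫ x in a..b, f x ^ 2) * Real.sqrt (∫ x in a..b, g x ^ 2))
      ≤ ∫ x in a..b, f x * g x := by
  set A := ∫ x in a..b, f x ^ 2 with hA
  set B := ∫ x in a..b, f x * g x with hB
  set C := ∫ x in a..b, g x ^ 2 with hC
  have hAnn : 0 ≤ A := intervalIntegral.integral_nonneg hab (fun x _ => sq_nonneg _)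
  have hCnn : 0 ≤ C := intervalIntegral.integral_nonneg hab (fun x _ => sq_nonneg _)
  have hdisc : discrim A (2 * B) C ≤ 0 := by
    apply discrim_le_zero
    intro t
    have hint : ∀ x, (t * f x + g x) ^ 2
        = t * t * f x ^ 2 + (2 * t) * (f x * g x) + g x ^ 2 := by
      intro x; ring
    have h1 : (0:ℝ) ≤ ∫ x in a..b, (t * f x + g x) ^ 2 :=
      intervalIntegral.integral_nonneg hab (fun x _ => sq_nonneg _)
    have hif : IntervalIntegrable (fun x => f x ^ 2) MeasureTheory.volume a b :=
      (hf.pow 2).intervalIntegrable a b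
    have hig : IntervalIntegrable (fun x => g x ^ 2) MeasureTheory.volume a b :=
      (hg.pow 2).intervalIntegrable a b
    have hifg : IntervalIntegrable (fun x => f x * g x) MeasureTheory.volume a b :=
      (hf.mul hg).intervalIntegrable a b
    have heq : (∫ x in a..b, (t * f x + g x) ^ 2)
        = A * (t * t) + (2 * B) * t + C := by
      simp_rw [hint]
      rw [intervalIntegral.integral_add (((hif.const_mul _)).add (hifg.const_mul _)) hig,
        intervalIntegral.integral_add (hif.const_mul _) (hifg.const_mul _),
        intervalIntegral.integral_const_mul, intervalIntegral.integral_const_mul]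
      ring
    calc (0:ℝ) ≤ ∫ x in a..b, (t * f x + g x) ^ 2 := h1
      _ = A * (t * t) + (2 * B) * t + C := heq
  have hsq : B ^ 2 ≤ A * C := by
    have := hdisc
    rw [discrim] at this
    nlinarith
  have hrt : |B| ≤ Real.sqrt A * Real.sqrt C := by
    rw [← Real.sqrt_mul_self (abs_nonneg B)] at *
    rw [← Real.sqrt_mul hAnn]
    apply Real.sqrt_le_sqrt
    nlinarith [sq_abs B]
  linarith [neg_abs_le B]

/-- Theorem 6: if `⟨u,v⟩_{L²} ≥ 0` and the flux-reconstruction parameter `c ≥ 0`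
satisfies `c ‖D^k u‖ ‖D^k v‖ ≤ ⟨u,v⟩_{L²}`, then the broken Sobolev inner
product satisfies `⟨u,v⟩_{H^k_c} ≥ ⟨u,v⟩_{L²} − c ‖D^k u‖ ‖D^k v‖ ≥ 0`. -/
theorem broken_sobolev_nonneg (a b : ℝ) (hab : a < b) (k : ℕ) (hk : 1 ≤ k)
    (u v : ℝ → ℝ) (hu : ContDiff ℝ k u) (hv : ContDiff ℝ k v)
    (hL2 : 0 ≤ ∫ x in a..b, u x * v x)
    (c : ℝ) (hc : 0 ≤ c)
    (hcsmall : c * (Real.sqrt (∫ x in a..b, (iteratedDeriv k u x) ^ 2)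
        * Real.sqrt (∫ x in a..b, (iteratedDeriv k v x) ^ 2))
      ≤ ∫ x in a..b, u x * v x) :
    (∫ x in a..b, u x * v x)
        + c * ∫ x in a..b, iteratedDeriv k u x * iteratedDeriv k v x
      ≥ (∫ x in a..b, u x * v x)
          - c * (Real.sqrt (∫ x in a..b, (iteratedDeriv k u x) ^ 2)
              * Real.sqrt (∫ x in a..b, (iteratedDeriv k v x) ^ 2)) ∧
    (∫ x in a..b, u x * v x)
        - c * (Real.sqrt (∫ x in a..b, (iteratedDeriv k u x) ^ 2)
            * Real.sqrt (∫ x in a..b, (iteratedDeriv k v x) ^ 2))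
      ≥ 0 := by
  have hfu : Continuous (iteratedDeriv k u) := hu.continuous_iteratedDeriv k le_rfl
  have hfv : Continuous (iteratedDeriv k v) := hv.continuous_iteratedDeriv k le_rfl
  have hcs := integral_cauchy_schwarz a b hab.le _ _ hfu hfv
  constructor
  · have : c * -(Real.sqrt (∫ x in a..b, (iteratedDeriv k u x) ^ 2)
        * Real.sqrt (∫ x in a..b, (iteratedDeriv k v x) ^ 2))
      ≤ c * ∫ x in a..b, iteratedDeriv k u x * iteratedDeriv k v x :=
      mul_le_mul_of_nonneg_left hcs hc
    linarith
  · linarith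
end
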